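/- arXiv:2502.20380 — 2 statements merged into one kernel-verified Lean document; each statement's English description precedes it below -/
import Mathlib

section
/- Performance Difference Lemma: for any two policies π and π' in a finite-horizon MDP with horizon T, J(π) − J(π') = Σ_{t=1}^{T} E_{s_t ∼ d^π_t} [ Σ_{a_t} A^{π'}(s_t, a_t) · π(a_t | s_t) ], where d^π_t is the state distribution at time t induced by π and A^{π'}(s,a) = Q^{π'}(s,a) − V^{π'}(s). -/
/-- Performance Difference Lemma: for any two policies `π, π'` in a finite
MDP with horizon `T`, `J(π) - J(π') = Σ_{t<T} γ^t E_{s ∼ d^π_t}[Σ_a A^{π'}(s,a) π(a|s)]`,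
where value functions are indexed by the number of remaining steps and
`A^{π'}(s,a) = Q^{π'}(s,a) - V^{π'}(s)` with `V^{π'}(s) = Σ_a π'(a|s) Q^{π'}(s,a)`. -/
theorem stmt_2 {S A : Type} [Fintype S] [Fintype A]
    (T : ℕ) (γ : ℝ)
    (P : S → A → S → ℝ) (r : S → A → ℝ) (ρ : S → ℝ)
    (π π' : S → A → ℝ)
    (hπ : ∀ s, (∀ a, 0 ≤ π s a) ∧ ∑ a, π s a = 1)
    (hπ' : ∀ s, (∀ a, 0 ≤ π' s a) ∧ ∑ a, π' s a = 1)
    (hP : ∀ s a, (∀ s', 0 ≤ P s a s') ∧ ∑ s', P s a s' = 1)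
    (hρ : (∀ s, 0 ≤ ρ s) ∧ ∑ s, ρ s = 1)
    (Vpol : (S → A → ℝ) → ℕ → S → ℝ)
    (Qpol : (S → A → ℝ) → ℕ → S → A → ℝ)
    (hV0 : ∀ μ s, Vpol μ 0 s = 0)
    (hQ : ∀ μ t s a, Qpol μ t s a = r s a + γ * ∑ s', P s a s' * Vpol μ t s')
    (hV : ∀ μ t s, Vpol μ (t + 1) s = ∑ a, μ s a * Qpol μ t s a)
    (d : ℕ → S → ℝ)
    (hd0 : ∀ s, d 0 s = ρ s)
    (hd : ∀ t s', d (t + 1) s' = ∑ s, ∑ a, d t s * π s a * P s a s')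
    (J : (S → A → ℝ) → ℝ)
    (hJ : ∀ μ, J μ = ∑ s, ρ s * Vpol μ T s) :
    J π - J π' = ∑ t ∈ Finset.range T, γ ^ t *
      ∑ s, d t s * ∑ a, π s a *
        (Qpol π' (T - 1 - t) s a - ∑ b, π' s b * Qpol π' (T - 1 - t) s b) := by
  classical
  set W : ℕ → ℝ := fun t => γ ^ t * ∑ s, d t s * (Vpol π (T - t) s - Vpol π' (T - t) s)
    with hWdef
  have step : ∀ t, t < T → W t - W (t + 1) =
      γ ^ t * ∑ s, d t s * ∑ a, π s a *
        (Qpol π' (T - 1 - t) s a - ∑ b, π' s b * Qpol π' (T - 1 - t) s b) := by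
    intro t ht
    set m := T - 1 - t with hm
    have hTt : T - t = m + 1 := by omega
    have hTt1 : T - (t + 1) = m := by omega
    have key : ∀ s, Vpol π (m + 1) s - Vpol π' (m + 1) s =
        (∑ a, π s a * (Qpol π' m s a - ∑ b, π' s b * Qpol π' m s b))
        + γ * ∑ a, π s a * ∑ s', P s a s' * (Vpol π m s' - Vpol π' m s') := by
      intro s
      have h1 := (hπ s).2
      have hQd : ∀ a, γ * ∑ s', P s a s' * (Vpol π m s' - Vpol π' m s')
          = Qpol π m s a - Qpol π' m s a := by
        intro a
        rw [hQ, hQ]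
        simp only [mul_sub, Finset.sum_sub_distrib]
        ring
      have e1 : ∑ a, π s a * (Qpol π' m s a - ∑ b, π' s b * Qpol π' m s b)
          = (∑ a, π s a * Qpol π' m s a) - ∑ b, π' s b * Qpol π' m s b := by
        simp only [mul_sub, Finset.sum_sub_distrib, ← Finset.sum_mul, h1, one_mul]
      have e2 : γ * ∑ a, π s a * ∑ s', P s a s' * (Vpol π m s' - Vpol π' m s')
          = (∑ a, π s a * Qpol π m s a) - ∑ a, π s a * Qpol π' m s a := by
        rw [Finset.mul_sum, ← Finset.sum_sub_distrib]
        refine Finset.sum_congr rfl fun a _ => ?_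
        rw [← mul_sub, ← hQd a]; ring
      rw [hV, hV, e1, e2]; ring
    have swap : ∑ s', d (t + 1) s' * (Vpol π m s' - Vpol π' m s')
        = ∑ s, d t s * ∑ a, π s a * ∑ s', P s a s' * (Vpol π m s' - Vpol π' m s') := by
      simp only [hd, Finset.sum_mul, Finset.mul_sum]
      rw [Finset.sum_comm]
      refine Finset.sum_congr rfl fun s _ => ?_
      rw [Finset.sum_comm]
      refine Finset.sum_congr rfl fun a _ => Finset.sum_congr rfl fun s' _ => by ring
    simp only [hWdef, hTt, hTt1]
    rw [swap]
    have expand : ∑ s, d t s * (Vpol π (m + 1) s - Vpol π' (m + 1) s)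
        = (∑ s, d t s * ∑ a, π s a * (Qpol π' m s a - ∑ b, π' s b * Qpol π' m s b))
          + γ * ∑ s, d t s * ∑ a, π s a * ∑ s', P s a s' * (Vpol π m s' - Vpol π' m s') := by
      rw [Finset.mul_sum, ← Finset.sum_add_distrib]
      refine Finset.sum_congr rfl fun s _ => ?_
      rw [key s]; ring
    rw [expand]; ring
  have tele := Finset.sum_range_sub' W T
  have main : ∑ t ∈ Finset.range T, γ ^ t *
      ∑ s, d t s * ∑ a, π s a *
        (Qpol π' (T - 1 - t) s a - ∑ b, π' s b * Qpol π' (T - 1 - t) s b)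
      = W 0 - W T := by
    rw [← tele]
    exact Finset.sum_congr rfl fun t ht => (step t (Finset.mem_range.mp ht)).symm
  rw [main]
  have hW0 : W 0 = J π - J π' := by
    simp only [hWdef, pow_zero, one_mul, Nat.sub_zero, hd0, hJ, mul_sub,
      Finset.sum_sub_distrib]
  have hWT : W T = 0 := by
    simp [hWdef, hV0]
  rw [hW0, hWT, sub_zero]
end

section
/- Hölder-type bound for performance difference: in a one-step recoverable MDP with horizon T, for any policies π* (optimal) and π, J(π*) − J(π) ≤ Σ_{t=1}^{T} E_{s_t ∼ d^π_t} ‖π(·|s_t) − π*(·|s_t)‖₁. -/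
/-- Hölder-type bound: in a one-step recoverable MDP with horizon `T`
(i.e. `-1 ≤ A*(s,a) ≤ 0`), assuming the Performance Difference Lemma, for any policies
`π*` (optimal) and `π`:
`J(π*) - J(π) ≤ Σ_{t<T} E_{s ∼ d^π_t} ‖π(·|s) - π*(·|s)‖₁`. -/
theorem stmt_6 {S A : Type} [Fintype S] [Fintype A]
    (T : ℕ) (πstar π : S → A → ℝ) (Astar : S → A → ℝ)
    (hA : ∀ s a, -1 ≤ Astar s a ∧ Astar s a ≤ 0)
    (d : ℕ → S → ℝ) (hd : ∀ t s, 0 ≤ d t s)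
    (Jstar Jπ : ℝ)
    (hPDL : Jstar - Jπ = ∑ t ∈ Finset.range T, ∑ s, d t s *
        ∑ a, Astar s a * (πstar s a - π s a)) :
    Jstar - Jπ ≤ ∑ t ∈ Finset.range T, ∑ s, d t s * ∑ a, |π s a - πstar s a| := by
  rw [hPDL]
  refine Finset.sum_le_sum fun t _ => Finset.sum_le_sum fun s _ =>
    mul_le_mul_of_nonneg_left (Finset.sum_le_sum fun a _ => ?_) (hd t s)
  calc Astar s a * (πstar s a - π s a)
      ≤ |Astar s a * (πstar s a - π s a)| := le_abs_self _
    _ = |Astar s a| * |πstar s a - π s a| := abs_mul _ _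
    _ ≤ 1 * |πstar s a - π s a| := by
        apply mul_le_mul_of_nonneg_right _ (abs_nonneg _)
        rw [abs_le]; exact ⟨(hA s a).1, (hA s a).2.trans zero_le_one⟩
    _ = |π s a - πstar s a| := by rw [one_mul, abs_sub_comm]
end
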